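/- Let V be a finite-dimensional vector space over K = GF(2) and f : V → V nilpotent, with V = ⟨u_1⟩ ⊕ ⟨u_2⟩, e(u_1) = R, e(u_2) = S, and R + 1 < S. If X is a characteristic subspace of V that is not hyperinvariant, then there exist integers s, q with 0 < s < q and 0 ≤ R − s < S − q such that X = ⟨f^{R−s}(u_1) + f^{S−q}(u_2)⟩^c, and the largest hyperinvariant subspace contained in X is X_H = ⟨f^{R−s+1}(u_1)⟩ + ⟨f^{S−q+1}(u_2)⟩ = f^{R−s+1}(V) ∩ ker(f^{q−1}). -/

import Mathlib

/-!
Let `π₁ = proj₁`, `π₂ = proj₂` be the projections of `V = ⟨u₁⟩ ⊕ ⟨u₂⟩`, and let `σ = toFst`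
(`u₁ ↦ 0`, `u₂ ↦ u₁`) and `τ = toSnd` (`u₁ ↦ f^{S-R} u₂`, `u₂ ↦ 0`); all four commute with `f`.
Since `f π₁`, `f π₂`, `σ`, `τ` are nilpotent, `X` is stable under them, through the automorphisms
`1 + n`. The invariant subspaces of a cyclic subspace `⟨u⟩` are the `⟨f^a u⟩`, so
`π₁ X = ⟨f^a u₁⟩` and `π₂ X = ⟨f^d u₂⟩`, and then
`⟨f^{a+1} u₁⟩ + ⟨f^{d+1} u₂⟩ ≤ X ≤ ⟨f^a u₁⟩ + ⟨f^d u₂⟩`. If `X` contained `f^a u₁` or `f^d u₂`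
it would be `π₁`-stable, hence equal to `⟨f^a u₁⟩ + ⟨f^d u₂⟩`, which `σ` and `τ` force to be
hyperinvariant. Over `GF(2)` the only possibility left is
`X = ⟨f^{a+1} u₁⟩ + ⟨f^{d+1} u₂⟩ + span {f^a u₁ + f^d u₂}`; applying `σ` and `τ` to the last
generator gives `a < d < a + S - R`, and the first two summands form `X_H`.
The theorem follows with `s = R - a`, `q = S - d`.
-/

open Module LinearMap

section Defs

variable {K V : Type*} [Field K] [AddCommGroup V] [Module K V]

/-- `α` commutes with `f`. -/
def Commutes (f : V →ₗ[K] V) (α : V ≃ₗ[K] V) : Prop :=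
  ∀ v, α (f v) = f (α v)

/-- `X` is hyperinvariant: invariant under every endomorphism commuting with `f`. -/
def Hyperinv (f : V →ₗ[K] V) (X : Submodule K V) : Prop :=
  ∀ g : V →ₗ[K] V, (∀ v, g (f v) = f (g v)) → ∀ x ∈ X, g x ∈ X

/-- `X` is characteristic: `f`-invariant and invariant under every automorphism
commuting with `f`. -/
def Charinv (f : V →ₗ[K] V) (X : Submodule K V) : Prop :=
  (∀ x ∈ X, f x ∈ X) ∧ ∀ α : V ≃ₗ[K] V, Commutes f α → ∀ x ∈ X, α x ∈ X

/-- The characteristic hull of a set `B`: the subspace spanned by all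
`f^i (α b)`, `b ∈ B`, `α` an automorphism commuting with `f`. -/
def charHull (f : V →ₗ[K] V) (B : Set V) : Submodule K V :=
  Submodule.span K
    {y | ∃ b ∈ B, ∃ i : ℕ, ∃ α : V ≃ₗ[K] V, Commutes f α ∧ y = (f ^ i) (α b)}

/-- The `f`-cyclic subspace generated by `x`. -/
def cyc (f : V →ₗ[K] V) (x : V) : Submodule K V :=
  Submodule.span K (Set.range fun i : ℕ => (f ^ i) x)

/-- The `f`-invariant span of a set `B`. -/
def invSpan (f : V →ₗ[K] V) (B : Set V) : Submodule K V :=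
  Submodule.span K {y | ∃ b ∈ B, ∃ i : ℕ, y = (f ^ i) b}

/-- The exponent of `x`: the least `ℓ` with `f^ℓ x = 0`. -/
noncomputable def expnt (f : V →ₗ[K] V) (x : V) : ℕ :=
  sInf {ℓ : ℕ | (f ^ ℓ) x = 0}

/-- The height of `x`: the largest `q` with `x ∈ f^q V`. -/
noncomputable def hgt (f : V →ₗ[K] V) (x : V) : ℕ :=
  sSup {q : ℕ | x ∈ LinearMap.range (f ^ q)}

/-- `u` is a generator of `V`: `V = ⟨u⟩ ⊕ V₂` for some `f`-invariant `V₂`. -/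
def IsGenerator (f : V →ₗ[K] V) (u : V) : Prop :=
  u ≠ 0 ∧ ∃ V₂ : Submodule K V, (∀ x ∈ V₂, f x ∈ V₂) ∧ IsCompl (cyc f u) V₂

/-- `(u 0, …, u (m-1))` is a generator tuple of `V`:
`V = ⟨u 0⟩ ⊕ ⋯ ⊕ ⟨u (m-1)⟩` with nondecreasing exponents. -/
def IsGenTuple {m : ℕ} (f : V →ₗ[K] V) (u : Fin m → V) : Prop :=
  DirectSum.IsInternal (fun i => cyc f (u i)) ∧ Monotone fun i => expnt f (u i)

/-- The Ulm invariant `d(f,r) = dim ((ker f ⊓ f^{r-1} V) / (ker f ⊓ f^r V))`. -/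
noncomputable def ulm (f : V →ₗ[K] V) (r : ℕ) : ℕ :=
  Module.finrank K
    (↥(LinearMap.ker f ⊓ LinearMap.range (f ^ (r - 1))) ⧸
      Submodule.comap (LinearMap.ker f ⊓ LinearMap.range (f ^ (r - 1))).subtype
        (LinearMap.ker f ⊓ LinearMap.range (f ^ r)))

/-- The largest hyperinvariant subspace contained in `X`
(the sum of all hyperinvariant subspaces contained in `X`). -/
noncomputable def largestHyperinv (f : V →ₗ[K] V) (X : Submodule K V) : Submodule K V :=
  sSup {W : Submodule K V | Hyperinv f W ∧ W ≤ X}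

end Defs


open Submodule

section Cyclic

variable {K V : Type*} [Field K] [AddCommGroup V] [Module K V] {f : V →ₗ[K] V}

theorem pow_apply_pow (f : V →ₗ[K] V) (m k : ℕ) (v : V) :
    (f ^ m) ((f ^ k) v) = (f ^ (m + k)) v := by
  rw [pow_add, Module.End.mul_apply]

theorem Commute.apply_pow_apply {g : V →ₗ[K] V} (hg : Commute g f) (k : ℕ) (v : V) :
    g ((f ^ k) v) = (f ^ k) (g v) :=
  LinearMap.congr_fun (hg.pow_right k).eq v

theorem pow_apply_mem {W : Submodule K V} (hW : ∀ w ∈ W, f w ∈ W) (k : ℕ) {v : V}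
    (hv : v ∈ W) : (f ^ k) v ∈ W := by
  induction k with
  | zero => simpa using hv
  | succ k ih => rw [pow_succ', Module.End.mul_apply]; exact hW _ ih

theorem pow_apply_mem_of_le {W : Submodule K V} (hW : ∀ w ∈ W, f w ∈ W) {u : V} {k m : ℕ}
    (hk : (f ^ k) u ∈ W) (hkm : k ≤ m) : (f ^ m) u ∈ W := by
  simpa [pow_apply_pow, Nat.sub_add_cancel hkm] using pow_apply_mem hW (m - k) hk

theorem pow_apply_mem_cyc (f : V →ₗ[K] V) (x : V) (i : ℕ) : (f ^ i) x ∈ cyc f x :=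
  subset_span ⟨i, rfl⟩

theorem mem_cyc_self (f : V →ₗ[K] V) (x : V) : x ∈ cyc f x := by
  simpa using pow_apply_mem_cyc f x 0

theorem cyc_le_iff {x : V} {W : Submodule K V} : cyc f x ≤ W ↔ ∀ i : ℕ, (f ^ i) x ∈ W := by
  simp [cyc, span_le, Set.range_subset_iff]

theorem map_cyc {g : V →ₗ[K] V} (hg : Commute g f) (x : V) : (cyc f x).map g = cyc f (g x) := by
  rw [cyc, cyc, Submodule.map_span, ← Set.range_comp]
  simp only [Function.comp_def, hg.apply_pow_apply]

theorem apply_mem_cyc {x v : V} (hv : v ∈ cyc f x) : f v ∈ cyc f x := by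
  have hle : cyc f (f x) ≤ cyc f x := cyc_le_iff.2 fun i => by
    rw [← Module.End.mul_apply, ← pow_succ]; exact pow_apply_mem_cyc f x _
  exact hle (map_cyc (Commute.refl f) x ▸ mem_map_of_mem hv)

theorem cyc_le_of_mem {W : Submodule K V} (hW : ∀ w ∈ W, f w ∈ W) {x : V} (hx : x ∈ W) :
    cyc f x ≤ W :=
  cyc_le_iff.2 fun i => pow_apply_mem hW i hx

theorem cyc_le_cyc_of_mem {x y : V} (h : y ∈ cyc f x) : cyc f y ≤ cyc f x :=
  cyc_le_of_mem (fun _ => apply_mem_cyc) h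

theorem pow_apply_mem_cyc_pow (u : V) {k m : ℕ} (hkm : k ≤ m) : (f ^ m) u ∈ cyc f ((f ^ k) u) := by
  simpa [pow_apply_pow, Nat.sub_add_cancel hkm] using pow_apply_mem_cyc f ((f ^ k) u) (m - k)

@[simp]
theorem cyc_zero : cyc f 0 = ⊥ :=
  eq_bot_iff.2 (cyc_le_iff.2 fun _ => by simp)

theorem cyc_eq_span_sup (x : V) : cyc f x = span K {x} ⊔ cyc f (f x) := by
  refine le_antisymm (cyc_le_iff.2 fun i => ?_) (sup_le ?_ ?_)
  · cases i with
    | zero => exact mem_sup_left (by simp [mem_span_singleton_self x])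
    | succ i =>
      rw [pow_succ, Module.End.mul_apply]
      exact mem_sup_right (pow_apply_mem_cyc f _ i)
  · exact span_le.2 (Set.singleton_subset_iff.2 (mem_cyc_self f x))
  · exact cyc_le_cyc_of_mem (apply_mem_cyc (mem_cyc_self f x))

/-- Descending induction on `i` from the nilpotency index: once all `f^j x` with `j > i` lie in
`W`, so does `f^i x = f^i w - f^i (w - x)`. -/
theorem cyc_le_of_sub_mem (hf : IsNilpotent f) {W : Submodule K V} (hW : ∀ w ∈ W, f w ∈ W)
    {w x : V} (hw : w ∈ W) (hwx : w - x ∈ cyc f (f x)) : cyc f x ≤ W := by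
  obtain ⟨N, hN⟩ := hf
  suffices ∀ n i, N ≤ n + i → (f ^ i) x ∈ W from cyc_le_iff.2 fun i => this N i (by omega)
  intro n
  induction n with
  | zero =>
    intro i hi
    rw [pow_eq_zero_of_le (by omega) hN, LinearMap.zero_apply]
    exact zero_mem W
  | succ n ih =>
    intro i hi
    have htail : cyc f ((f ^ (i + 1)) x) ≤ W :=
      cyc_le_iff.2 fun j => by rw [pow_apply_pow]; exact ih _ (by omega)
    have hdiff : (f ^ i) (w - x) ∈ cyc f ((f ^ (i + 1)) x) := by
      rw [pow_succ, Module.End.mul_apply, ← map_cyc ((Commute.refl f).pow_left i)]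
      exact mem_map_of_mem hwx
    simpa using sub_mem (pow_apply_mem hW i hw) (htail hdiff)

theorem cyc_le_of_mem_of_not_mem (hf : IsNilpotent f) {W : Submodule K V}
    (hW : ∀ w ∈ W, f w ∈ W) {w x : V} (hw : w ∈ W) (hwx : w ∈ cyc f x)
    (hwfx : w ∉ cyc f (f x)) : cyc f x ≤ W := by
  rw [cyc_eq_span_sup, mem_sup] at hwx
  obtain ⟨_, hy, z, hz, rfl⟩ := hwx
  obtain ⟨c, rfl⟩ := mem_span_singleton.1 hy
  have hc : c ≠ 0 := by rintro rfl; simp_all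
  refine cyc_le_of_sub_mem hf hW (W.smul_mem c⁻¹ hw) ?_
  rw [smul_add, inv_smul_smul₀ hc, add_sub_cancel_left]
  exact smul_mem _ _ hz

theorem exists_eq_cyc_pow (hf : IsNilpotent f) {W : Submodule K V} (hW : ∀ w ∈ W, f w ∈ W)
    {u : V} (hWu : W ≤ cyc f u) : ∃ a, W = cyc f ((f ^ a) u) := by
  obtain ⟨N, hN⟩ := id hf
  suffices ∀ n k, N ≤ n + k → W ≤ cyc f ((f ^ k) u) → ∃ a, W = cyc f ((f ^ a) u) from
    this N 0 (by omega) (by simpa using hWu)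
  intro n
  induction n with
  | zero =>
    intro k hk hWk
    refine ⟨k, le_antisymm hWk ?_⟩
    rw [pow_eq_zero_of_le (by omega) hN, LinearMap.zero_apply, cyc_zero]
    exact bot_le
  | succ n ih =>
    intro k hk hWk
    by_cases hWk' : W ≤ cyc f ((f ^ (k + 1)) u)
    · exact ih (k + 1) (by omega) hWk'
    · obtain ⟨w, hw, hwk⟩ := SetLike.not_le_iff_exists.1 hWk'
      rw [pow_succ', Module.End.mul_apply] at hwk
      exact ⟨k, le_antisymm hWk (cyc_le_of_mem_of_not_mem hf hW hw (hWk hw) hwk)⟩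

end Cyclic

section Exponent

variable {K V : Type*} [Field K] [AddCommGroup V] [Module K V] {f : V →ₗ[K] V}

theorem pow_expnt_apply (hf : IsNilpotent f) (u : V) : (f ^ expnt f u) u = 0 := by
  obtain ⟨N, hN⟩ := hf
  exact Nat.sInf_mem (s := {ℓ | (f ^ ℓ) u = 0}) ⟨N, by simp [hN]⟩

theorem expnt_le {u : V} {k : ℕ} (h : (f ^ k) u = 0) : expnt f u ≤ k :=
  Nat.sInf_le h

theorem pow_apply_eq_zero_of_expnt_le (hf : IsNilpotent f) {u : V} {k : ℕ}
    (h : expnt f u ≤ k) : (f ^ k) u = 0 := by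
  rw [← Nat.sub_add_cancel h, ← pow_apply_pow, pow_expnt_apply hf, map_zero]

theorem pow_apply_pow_expnt_sub (hf : IsNilpotent f) {u : V} {k : ℕ} (hk : k ≤ expnt f u) :
    (f ^ k) ((f ^ (expnt f u - k)) u) = 0 := by
  rw [pow_apply_pow, Nat.add_sub_cancel' hk, pow_expnt_apply hf]

theorem linearIndependent_pow_apply (hf : IsNilpotent f) (u : V) :
    LinearIndependent K fun i : Fin (expnt f u) => (f ^ (i : ℕ)) u := by
  rw [Fintype.linearIndependent_iff]
  intro c hc i
  induction i using WellFoundedLT.induction with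
  | _ i ih =>
  have hi := i.isLt
  have key : (f ^ (expnt f u - 1 - i)) (∑ j, c j • (f ^ (j : ℕ)) u) =
      c i • (f ^ (expnt f u - 1)) u := by
    rw [map_sum, Finset.sum_eq_single i]
    · rw [map_smul, pow_apply_pow, Nat.sub_add_cancel (by omega)]
    · intro j _ hji
      rcases lt_or_gt_of_ne hji with hlt | hgt
      · rw [ih j hlt, zero_smul, map_zero]
      · rw [map_smul, pow_apply_pow, pow_apply_eq_zero_of_expnt_le hf (by omega), smul_zero]
    · simp
  rw [hc, map_zero] at key
  refine (smul_eq_zero.1 key.symm).resolve_right fun h0 => ?_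
  have := expnt_le h0
  omega

theorem span_pow_apply_eq_cyc (hf : IsNilpotent f) (u : V) :
    span K (Set.range fun i : Fin (expnt f u) => (f ^ (i : ℕ)) u) = cyc f u := by
  refine le_antisymm (span_le.2 (Set.range_subset_iff.2 fun i => pow_apply_mem_cyc f u i))
    (cyc_le_iff.2 fun i => ?_)
  rcases lt_or_ge i (expnt f u) with hi | hi
  · exact subset_span ⟨⟨i, hi⟩, rfl⟩
  · rw [pow_apply_eq_zero_of_expnt_le hf hi]
    exact zero_mem _

theorem cyc_inf_ker_pow_le (hf : IsNilpotent f) (u : V) (m : ℕ) :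
    cyc f u ⊓ ker (f ^ m) ≤ cyc f ((f ^ (expnt f u - m)) u) := by
  have hinv : ∀ w ∈ cyc f u ⊓ ker (f ^ m), f w ∈ cyc f u ⊓ ker (f ^ m) := by
    intro w hw
    obtain ⟨hwu, hwm⟩ := mem_inf.1 hw
    refine mem_inf.2 ⟨apply_mem_cyc hwu, ?_⟩
    rw [mem_ker, ← Module.End.mul_apply, ← pow_succ, pow_succ', Module.End.mul_apply,
      mem_ker.1 hwm, map_zero]
  obtain ⟨b, hb⟩ := exists_eq_cyc_pow hf hinv inf_le_left
  have hmb : (f ^ (m + b)) u = 0 := by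
    rw [← pow_apply_pow]
    exact mem_ker.1 (hb ▸ mem_cyc_self f ((f ^ b) u) : (f ^ b) u ∈ cyc f u ⊓ ker (f ^ m)).2
  rw [hb]
  exact cyc_le_cyc_of_mem (pow_apply_mem_cyc_pow u (by have := expnt_le hmb; omega))

end Exponent

section Decomposition

variable {K V : Type*} [Field K] [AddCommGroup V] [Module K V] {f : V →ₗ[K] V}

structure TwoCyclic (f : V →ₗ[K] V) (u₁ u₂ : V) : Prop where
  isNilpotent : IsNilpotent f
  isCompl : IsCompl (cyc f u₁) (cyc f u₂)

namespace TwoCyclic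

variable {u₁ u₂ : V} (h : TwoCyclic f u₁ u₂)
include h

theorem ext {g g' : V →ₗ[K] V} (hg : Commute g f) (hg' : Commute g' f) (h₁ : g u₁ = g' u₁)
    (h₂ : g u₂ = g' u₂) : g = g' := by
  rw [← eqLocus_eq_top, eq_top_iff, ← h.isCompl.sup_eq_top]
  refine sup_le (cyc_le_iff.2 fun i => ?_) (cyc_le_iff.2 fun i => ?_) <;>
    simp [hg.apply_pow_apply, hg'.apply_pow_apply, h₁, h₂]

noncomputable def basis : Basis (Fin (expnt f u₁) ⊕ Fin (expnt f u₂)) K V :=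
  Basis.mk
    ((linearIndependent_pow_apply h.isNilpotent u₁).sum_type
      (linearIndependent_pow_apply h.isNilpotent u₂)
      (by simpa only [span_pow_apply_eq_cyc h.isNilpotent] using h.isCompl.disjoint))
    (by rw [Set.Sum.elim_range, span_union, span_pow_apply_eq_cyc h.isNilpotent,
      span_pow_apply_eq_cyc h.isNilpotent, h.isCompl.sup_eq_top])

theorem basis_inl (i : Fin (expnt f u₁)) : h.basis (Sum.inl i) = (f ^ (i : ℕ)) u₁ :=
  Basis.mk_apply _ _ _

theorem basis_inr (j : Fin (expnt f u₂)) : h.basis (Sum.inr j) = (f ^ (j : ℕ)) u₂ :=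
  Basis.mk_apply _ _ _

/-- `u₁ ↦ w₁`, `u₂ ↦ w₂`; this commutes with `f` only when `f^{e(u₁)} w₁ = 0` and
`f^{e(u₂)} w₂ = 0`. -/
noncomputable def endo (w₁ w₂ : V) : V →ₗ[K] V :=
  h.basis.constr K (Sum.elim (fun i => (f ^ (i : ℕ)) w₁) fun j => (f ^ (j : ℕ)) w₂)

theorem endo_pow_apply_left {w₁ : V} (hw₁ : (f ^ expnt f u₁) w₁ = 0) (w₂ : V) (m : ℕ) :
    h.endo w₁ w₂ ((f ^ m) u₁) = (f ^ m) w₁ := by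
  rcases lt_or_ge m (expnt f u₁) with hm | hm
  · simpa only [endo, h.basis_inl, Sum.elim_inl] using h.basis.constr_basis K
      (Sum.elim (fun i => (f ^ (i : ℕ)) w₁) fun j => (f ^ (j : ℕ)) w₂) (Sum.inl ⟨m, hm⟩)
  · rw [pow_apply_eq_zero_of_expnt_le h.isNilpotent hm, map_zero, ← Nat.sub_add_cancel hm,
      ← pow_apply_pow, hw₁, map_zero]

theorem endo_pow_apply_right (w₁ : V) {w₂ : V} (hw₂ : (f ^ expnt f u₂) w₂ = 0) (m : ℕ) :
    h.endo w₁ w₂ ((f ^ m) u₂) = (f ^ m) w₂ := by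
  rcases lt_or_ge m (expnt f u₂) with hm | hm
  · simpa only [endo, h.basis_inr, Sum.elim_inr] using h.basis.constr_basis K
      (Sum.elim (fun i => (f ^ (i : ℕ)) w₁) fun j => (f ^ (j : ℕ)) w₂) (Sum.inr ⟨m, hm⟩)
  · rw [pow_apply_eq_zero_of_expnt_le h.isNilpotent hm, map_zero, ← Nat.sub_add_cancel hm,
      ← pow_apply_pow, hw₂, map_zero]

theorem commute_endo {w₁ w₂ : V} (hw₁ : (f ^ expnt f u₁) w₁ = 0)
    (hw₂ : (f ^ expnt f u₂) w₂ = 0) : Commute (h.endo w₁ w₂) f := by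
  refine h.basis.ext fun i => ?_
  rcases i with i | j
  · simp only [h.basis_inl, Module.End.mul_apply]
    rw [← Module.End.mul_apply f, ← pow_succ', h.endo_pow_apply_left hw₁,
      h.endo_pow_apply_left hw₁, ← Module.End.mul_apply f, ← pow_succ']
  · simp only [h.basis_inr, Module.End.mul_apply]
    rw [← Module.End.mul_apply f, ← pow_succ', h.endo_pow_apply_right _ hw₂,
      h.endo_pow_apply_right _ hw₂, ← Module.End.mul_apply f, ← pow_succ']

theorem endo_apply_left {w₁ : V} (hw₁ : (f ^ expnt f u₁) w₁ = 0) (w₂ : V) :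
    h.endo w₁ w₂ u₁ = w₁ := by
  simpa using h.endo_pow_apply_left hw₁ w₂ 0

theorem endo_apply_right (w₁ : V) {w₂ : V} (hw₂ : (f ^ expnt f u₂) w₂ = 0) :
    h.endo w₁ w₂ u₂ = w₂ := by
  simpa using h.endo_pow_apply_right w₁ hw₂ 0

noncomputable def proj₁ : V →ₗ[K] V := h.endo u₁ 0

noncomputable def proj₂ : V →ₗ[K] V := h.endo 0 u₂

noncomputable def toFst : V →ₗ[K] V := h.endo 0 u₁

noncomputable def toSnd : V →ₗ[K] V := h.endo ((f ^ (expnt f u₂ - expnt f u₁)) u₂) 0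

theorem commute_proj₁ : Commute h.proj₁ f :=
  h.commute_endo (pow_expnt_apply h.isNilpotent u₁) (map_zero _)

theorem commute_proj₂ : Commute h.proj₂ f :=
  h.commute_endo (map_zero _) (pow_expnt_apply h.isNilpotent u₂)

theorem commute_toFst (hRS : expnt f u₁ ≤ expnt f u₂) : Commute h.toFst f :=
  h.commute_endo (map_zero _) (pow_apply_eq_zero_of_expnt_le h.isNilpotent hRS)

theorem commute_toSnd (hRS : expnt f u₁ ≤ expnt f u₂) : Commute h.toSnd f :=
  h.commute_endo (pow_apply_pow_expnt_sub h.isNilpotent hRS) (map_zero _)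

@[simp]
theorem proj₁_apply_left : h.proj₁ u₁ = u₁ :=
  h.endo_apply_left (pow_expnt_apply h.isNilpotent u₁) 0

@[simp]
theorem proj₁_apply_right : h.proj₁ u₂ = 0 :=
  h.endo_apply_right u₁ (map_zero _)

@[simp]
theorem proj₂_apply_left : h.proj₂ u₁ = 0 :=
  h.endo_apply_left (map_zero _) u₂

@[simp]
theorem proj₂_apply_right : h.proj₂ u₂ = u₂ :=
  h.endo_apply_right 0 (pow_expnt_apply h.isNilpotent u₂)

@[simp]
theorem toFst_apply_left : h.toFst u₁ = 0 :=
  h.endo_apply_left (map_zero _) u₁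

theorem toFst_apply_right (hRS : expnt f u₁ ≤ expnt f u₂) : h.toFst u₂ = u₁ :=
  h.endo_apply_right 0 (pow_apply_eq_zero_of_expnt_le h.isNilpotent hRS)

theorem toSnd_apply_left (hRS : expnt f u₁ ≤ expnt f u₂) :
    h.toSnd u₁ = (f ^ (expnt f u₂ - expnt f u₁)) u₂ :=
  h.endo_apply_left (pow_apply_pow_expnt_sub h.isNilpotent hRS) 0

@[simp]
theorem toSnd_apply_right : h.toSnd u₂ = 0 :=
  h.endo_apply_right _ (map_zero _)

theorem proj₁_add_proj₂ (v : V) : h.proj₁ v + h.proj₂ v = v := by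
  have : h.proj₁ + h.proj₂ = 1 :=
    h.ext (h.commute_proj₁.add_left h.commute_proj₂) (Commute.one_left f) (by simp) (by simp)
  exact LinearMap.congr_fun this v

theorem isNilpotent_toFst (hRS : expnt f u₁ ≤ expnt f u₂) : IsNilpotent h.toFst :=
  ⟨2, h.ext ((h.commute_toFst hRS).pow_left 2) (Commute.zero_left f)
    (by simp [sq]) (by simp [sq, h.toFst_apply_right hRS])⟩

theorem isNilpotent_toSnd (hRS : expnt f u₁ ≤ expnt f u₂) : IsNilpotent h.toSnd :=
  ⟨2, h.ext ((h.commute_toSnd hRS).pow_left 2) (Commute.zero_left f)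
    (by simp [sq, h.toSnd_apply_left hRS, (h.commute_toSnd hRS).apply_pow_apply]) (by simp [sq])⟩

end TwoCyclic

end Decomposition

section CycPair

variable {K V : Type*} [Field K] [AddCommGroup V] [Module K V] {f : V →ₗ[K] V} {u₁ u₂ : V}

def cycPair (f : V →ₗ[K] V) (u₁ u₂ : V) (k l : ℕ) : Submodule K V :=
  cyc f ((f ^ k) u₁) ⊔ cyc f ((f ^ l) u₂)

theorem map_cycPair {g : V →ₗ[K] V} (hg : Commute g f) (k l : ℕ) :
    (cycPair f u₁ u₂ k l).map g = cyc f ((f ^ k) (g u₁)) ⊔ cyc f ((f ^ l) (g u₂)) := by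
  rw [cycPair, Submodule.map_sup, map_cyc hg, map_cyc hg, hg.apply_pow_apply, hg.apply_pow_apply]

theorem map_pow_cycPair (m k l : ℕ) :
    (cycPair f u₁ u₂ k l).map (f ^ m) = cycPair f u₁ u₂ (m + k) (m + l) := by
  rw [map_cycPair ((Commute.refl f).pow_left m), pow_apply_pow, pow_apply_pow, add_comm k,
    add_comm l]
  rfl

theorem apply_mem_cycPair {k l : ℕ} {v : V} (hv : v ∈ cycPair f u₁ u₂ k l) :
    f v ∈ cycPair f u₁ u₂ k l := by
  obtain ⟨y, hy, z, hz, rfl⟩ := mem_sup.1 hv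
  rw [map_add]
  exact add_mem_sup (apply_mem_cyc hy) (apply_mem_cyc hz)

theorem cycPair_le_cycPair {k l k' l' : ℕ} (h₁ : (f ^ k') u₁ ∈ cyc f ((f ^ k) u₁))
    (h₂ : (f ^ l') u₂ ∈ cyc f ((f ^ l) u₂)) : cycPair f u₁ u₂ k' l' ≤ cycPair f u₁ u₂ k l :=
  sup_le_sup (cyc_le_cyc_of_mem h₁) (cyc_le_cyc_of_mem h₂)

theorem cycPair_le_ker_pow (hf : IsNilpotent f) {k l m : ℕ} (hk : expnt f u₁ ≤ m + k)
    (hl : expnt f u₂ ≤ m + l) : cycPair f u₁ u₂ k l ≤ ker (f ^ m) := by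
  refine sup_le (cyc_le_iff.2 fun i => ?_) (cyc_le_iff.2 fun i => ?_) <;>
    rw [mem_ker, pow_apply_pow, pow_apply_pow] <;>
    exact pow_apply_eq_zero_of_expnt_le hf (by omega)

namespace TwoCyclic

variable (h : TwoCyclic f u₁ u₂)
include h

theorem cycPair_zero_zero : cycPair f u₁ u₂ 0 0 = ⊤ := by
  simpa [cycPair] using h.isCompl.sup_eq_top

theorem mem_cycPair_iff {k l : ℕ} {v : V} :
    v ∈ cycPair f u₁ u₂ k l ↔ h.proj₁ v ∈ cyc f ((f ^ k) u₁) ∧ h.proj₂ v ∈ cyc f ((f ^ l) u₂) := by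
  refine ⟨fun hv => ⟨?_, ?_⟩, fun hv => h.proj₁_add_proj₂ v ▸ add_mem_sup hv.1 hv.2⟩
  · simpa [map_cycPair h.commute_proj₁] using mem_map_of_mem (f := h.proj₁) hv
  · simpa [map_cycPair h.commute_proj₂] using mem_map_of_mem (f := h.proj₂) hv

theorem proj₁_apply_mem (v : V) : h.proj₁ v ∈ cyc f u₁ := by
  simpa using ((h.mem_cycPair_iff (k := 0) (l := 0)).1 (h.cycPair_zero_zero ▸ mem_top)).1

theorem proj₂_apply_mem (v : V) : h.proj₂ v ∈ cyc f u₂ := by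
  simpa using ((h.mem_cycPair_iff (k := 0) (l := 0)).1 (h.cycPair_zero_zero ▸ mem_top)).2

theorem range_pow (m : ℕ) : range (f ^ m) = cycPair f u₁ u₂ m m := by
  rw [range_eq_map, ← h.cycPair_zero_zero, map_pow_cycPair, add_zero]

theorem ker_pow_le (m : ℕ) :
    ker (f ^ m) ≤ cycPair f u₁ u₂ (expnt f u₁ - m) (expnt f u₂ - m) := by
  intro v hv
  have hm {g : V →ₗ[K] V} (hg : Commute g f) : g v ∈ ker (f ^ m) := by
    rw [mem_ker, ← hg.apply_pow_apply, mem_ker.1 hv, map_zero]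
  rw [h.mem_cycPair_iff]
  exact ⟨cyc_inf_ker_pow_le h.isNilpotent u₁ m ⟨h.proj₁_apply_mem v, hm h.commute_proj₁⟩,
    cyc_inf_ker_pow_le h.isNilpotent u₂ m ⟨h.proj₂_apply_mem v, hm h.commute_proj₂⟩⟩

/-- An endomorphism `g` commuting with `f` sends `u₁` into `ker f^{e(u₁)} ≤ ⟨u₁⟩ + ⟨f^{S-R} u₂⟩`
and `u₂` anywhere, so `⟨f^k u₁⟩ + ⟨f^l u₂⟩` is `g`-stable as soon as it contains
`f^l u₁` and `f^{k+S-R} u₂`. -/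
theorem hyperinv_cycPair {k l : ℕ} (h₁ : (f ^ l) u₁ ∈ cyc f ((f ^ k) u₁))
    (h₂ : (f ^ (k + (expnt f u₂ - expnt f u₁))) u₂ ∈ cyc f ((f ^ l) u₂)) :
    Hyperinv f (cycPair f u₁ u₂ k l) := by
  intro g hg' v hv
  have hg : Commute g f := LinearMap.ext hg'
  have hgu₁ : g u₁ ∈ cycPair f u₁ u₂ 0 (expnt f u₂ - expnt f u₁) := by
    have := h.ker_pow_le (expnt f u₁)
      (mem_ker.2 (by rw [← hg.apply_pow_apply, pow_expnt_apply h.isNilpotent, map_zero]))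
    rwa [Nat.sub_self] at this
  have hgu₂ : g u₂ ∈ cycPair f u₁ u₂ 0 0 := h.cycPair_zero_zero ▸ mem_top
  suffices (cycPair f u₁ u₂ k l).map g ≤ cycPair f u₁ u₂ k l from this (mem_map_of_mem hv)
  rw [map_cycPair hg]
  refine sup_le (cyc_le_of_mem (fun _ => apply_mem_cycPair) ?_)
    (cyc_le_of_mem (fun _ => apply_mem_cycPair) ?_)
  · refine cycPair_le_cycPair (mem_cyc_self f _) h₂ ?_
    have := mem_map_of_mem (f := f ^ k) hgu₁
    rwa [map_pow_cycPair, add_zero] at this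
  · refine cycPair_le_cycPair h₁ (mem_cyc_self f _) ?_
    have := mem_map_of_mem (f := f ^ l) hgu₂
    rwa [map_pow_cycPair, add_zero] at this

theorem range_inf_ker {k l : ℕ} (hRS : expnt f u₁ ≤ expnt f u₂) (hkl : k ≤ l)
    (hlk : l ≤ k + (expnt f u₂ - expnt f u₁)) (hlS : l ≤ expnt f u₂) :
    range (f ^ k) ⊓ ker (f ^ (expnt f u₂ - l)) = cycPair f u₁ u₂ k l := by
  refine le_antisymm (fun v hv => ?_) (le_inf ?_ ?_)
  · have h₁ := (h.mem_cycPair_iff.1 (h.range_pow k ▸ (mem_inf.1 hv).1)).1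
    have h₂ := (h.mem_cycPair_iff.1 (h.ker_pow_le _ (mem_inf.1 hv).2)).2
    rw [Nat.sub_sub_self hlS] at h₂
    exact h.mem_cycPair_iff.2 ⟨h₁, h₂⟩
  · rw [h.range_pow]
    exact cycPair_le_cycPair (mem_cyc_self f _) (pow_apply_mem_cyc_pow u₂ hkl)
  · exact cycPair_le_ker_pow h.isNilpotent (by omega) (by omega)

end TwoCyclic

end CycPair

section Characteristic

variable {K V : Type*} [Field K] [AddCommGroup V] [Module K V] {f : V →ₗ[K] V}
  {X : Submodule K V}

/-- `1 + n` is an automorphism commuting with `f`. -/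
theorem Charinv.apply_mem (hX : Charinv f X) {n : V →ₗ[K] V} (hn : IsNilpotent n)
    (hnf : Commute n f) {x : V} (hx : x ∈ X) : n x ∈ X := by
  let α := LinearMap.GeneralLinearGroup.toLinearEquiv hn.isUnit_one_add.unit
  have hα (v : V) : α v = v + n v := rfl
  have hαf : Commutes f α := fun v => by
    rw [hα, hα, map_add, ← Module.End.mul_apply n, hnf.eq, Module.End.mul_apply]
  simpa [hα] using sub_mem (hX.2 α hαf x hx) hx

theorem Charinv.map_le (hX : Charinv f X) {n : V →ₗ[K] V} (hn : IsNilpotent n)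
    (hnf : Commute n f) : X.map n ≤ X :=
  map_le_iff_le_comap.2 fun _ => hX.apply_mem hn hnf

theorem charinv_charHull (B : Set V) : Charinv f (charHull f B) := by
  refine ⟨fun y hy => ?_, fun α hα y hy => ?_⟩
  · refine (span_le (p := (charHull f B).comap f).2 ?_) hy
    rintro _ ⟨b, hb, i, β, hβ, rfl⟩
    refine subset_span ⟨b, hb, i + 1, β, hβ, ?_⟩
    rw [pow_succ', Module.End.mul_apply]
  · refine (span_le (p := (charHull f B).comap α.toLinearMap).2 ?_) hy
    rintro _ ⟨b, hb, i, β, hβ, rfl⟩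
    have hαi : ∀ v, α ((f ^ i) v) = (f ^ i) (α v) :=
      (show Commute α.toLinearMap f from LinearMap.ext hα).apply_pow_apply i
    refine subset_span ⟨b, hb, i, β.trans α, fun v => ?_, by simp [hαi]⟩
    rw [LinearEquiv.trans_apply, LinearEquiv.trans_apply, hβ, hα]

theorem subset_charHull {B : Set V} {b : V} (hb : b ∈ B) : b ∈ charHull f B :=
  subset_span ⟨b, hb, 0, LinearEquiv.refl K V, fun _ => rfl, by simp⟩

theorem Charinv.charHull_le (hX : Charinv f X) {B : Set V} (hB : B ⊆ X) : charHull f B ≤ X :=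
  span_le.2 fun _ ⟨b, hb, i, α, hα, hy⟩ => hy ▸ pow_apply_mem hX.1 i (hX.2 α hα b (hB hb))

end Characteristic

namespace TwoCyclic

section CharacteristicSubspace

variable {K V : Type*} [Field K] [AddCommGroup V] [Module K V] {f : V →ₗ[K] V} {u₁ u₂ : V}
  (h : TwoCyclic f u₁ u₂) {X : Submodule K V} {a d : ℕ}
include h

theorem exists_map_proj₁_eq (hXf : ∀ x ∈ X, f x ∈ X) : ∃ a, X.map h.proj₁ = cyc f ((f ^ a) u₁) :=
  exists_eq_cyc_pow h.isNilpotent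
    (by rintro _ ⟨x, hx, rfl⟩; exact ⟨f x, hXf x hx, LinearMap.congr_fun h.commute_proj₁.eq x⟩)
    (map_le_iff_le_comap.2 fun v _ => h.proj₁_apply_mem v)

theorem exists_map_proj₂_eq (hXf : ∀ x ∈ X, f x ∈ X) : ∃ d, X.map h.proj₂ = cyc f ((f ^ d) u₂) :=
  exists_eq_cyc_pow h.isNilpotent
    (by rintro _ ⟨x, hx, rfl⟩; exact ⟨f x, hXf x hx, LinearMap.congr_fun h.commute_proj₂.eq x⟩)
    (map_le_iff_le_comap.2 fun v _ => h.proj₂_apply_mem v)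

theorem le_cycPair (ha : X.map h.proj₁ = cyc f ((f ^ a) u₁))
    (hd : X.map h.proj₂ = cyc f ((f ^ d) u₂)) : X ≤ cycPair f u₁ u₂ a d :=
  fun _ hv => h.mem_cycPair_iff.2 ⟨ha ▸ mem_map_of_mem hv, hd ▸ mem_map_of_mem hv⟩

/-- `X` is stable under the nilpotent maps `f π₁` and `f π₂`, which send it onto
`⟨f^{a+1} u₁⟩` and `⟨f^{d+1} u₂⟩`. -/
theorem cycPair_succ_le (hX : Charinv f X) (ha : X.map h.proj₁ = cyc f ((f ^ a) u₁))
    (hd : X.map h.proj₂ = cyc f ((f ^ d) u₂)) : cycPair f u₁ u₂ (a + 1) (d + 1) ≤ X := by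
  have key {π : V →ₗ[K] V} (hπ : Commute π f) {w : V} (hw : X.map π = cyc f w) :
      cyc f (f w) ≤ X := by
    rw [← map_cyc (Commute.refl f), ← hw, ← map_comp]
    exact hX.map_le (hπ.symm.isNilpotent_mul_right h.isNilpotent) ((Commute.refl f).mul_left hπ)
  rw [cycPair, pow_succ', pow_succ']
  exact sup_le (key h.commute_proj₁ ha) (key h.commute_proj₂ hd)

theorem hyperinv_of_map_proj₁_le (hRS : expnt f u₁ ≤ expnt f u₂) (hX : Charinv f X)
    (ha : X.map h.proj₁ = cyc f ((f ^ a) u₁)) (hd : X.map h.proj₂ = cyc f ((f ^ d) u₂))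
    (hX₁ : X.map h.proj₁ ≤ X) : Hyperinv f X := by
  have hX₂ : X.map h.proj₂ ≤ X := map_le_iff_le_comap.2 fun v hv => by
    rw [mem_comap, eq_sub_of_add_eq' (h.proj₁_add_proj₂ v)]
    exact sub_mem hv (hX₁ (mem_map_of_mem hv))
  have hXeq : X = cycPair f u₁ u₂ a d :=
    le_antisymm (h.le_cycPair ha hd) (sup_le (ha ▸ hX₁) (hd ▸ hX₂))
  have hu₁ : (f ^ a) u₁ ∈ X := hXeq ▸ mem_sup_left (mem_cyc_self f _)
  have hu₂ : (f ^ d) u₂ ∈ X := hXeq ▸ mem_sup_right (mem_cyc_self f _)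
  rw [hXeq]
  refine h.hyperinv_cycPair ?_ ?_
  · rw [← ha]
    refine ⟨h.toFst ((f ^ d) u₂),
      hX.apply_mem (h.isNilpotent_toFst hRS) (h.commute_toFst hRS) hu₂, ?_⟩
    simp [(h.commute_toFst hRS).apply_pow_apply, h.commute_proj₁.apply_pow_apply,
      h.toFst_apply_right hRS]
  · rw [← hd]
    refine ⟨h.toSnd ((f ^ a) u₁),
      hX.apply_mem (h.isNilpotent_toSnd hRS) (h.commute_toSnd hRS) hu₁, ?_⟩
    simp [(h.commute_toSnd hRS).apply_pow_apply, h.commute_proj₂.apply_pow_apply,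
      h.toSnd_apply_left hRS, pow_apply_pow]

theorem pow_apply_left_not_mem (hRS : expnt f u₁ ≤ expnt f u₂) (hX : Charinv f X)
    (hnh : ¬Hyperinv f X) (ha : X.map h.proj₁ = cyc f ((f ^ a) u₁))
    (hd : X.map h.proj₂ = cyc f ((f ^ d) u₂)) : (f ^ a) u₁ ∉ X := fun hu =>
  hnh (h.hyperinv_of_map_proj₁_le hRS hX ha hd (ha ▸ cyc_le_of_mem hX.1 hu))

theorem pow_apply_right_not_mem (hRS : expnt f u₁ ≤ expnt f u₂) (hX : Charinv f X)
    (hnh : ¬Hyperinv f X) (ha : X.map h.proj₁ = cyc f ((f ^ a) u₁))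
    (hd : X.map h.proj₂ = cyc f ((f ^ d) u₂)) : (f ^ d) u₂ ∉ X := fun hu =>
  hnh (h.hyperinv_of_map_proj₁_le hRS hX ha hd (map_le_iff_le_comap.2 fun v hv => by
    rw [mem_comap, eq_sub_of_add_eq (h.proj₁_add_proj₂ v)]
    exact sub_mem hv (cyc_le_of_mem hX.1 hu (hd ▸ mem_map_of_mem hv))))

end CharacteristicSubspace

end TwoCyclic

section ZModTwo

variable {V : Type*} [AddCommGroup V] [Module (ZMod 2) V]

theorem mem_sup_span_singleton_iff_zmod_two {Y : Submodule (ZMod 2) V} {x v : V} :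
    v ∈ Y ⊔ span (ZMod 2) {x} ↔ v ∈ Y ∨ v - x ∈ Y := by
  refine ⟨fun hv => ?_, fun hv => hv.elim mem_sup_left fun hvx => ?_⟩
  · obtain ⟨y, hy, _, hz, rfl⟩ := mem_sup.1 hv
    obtain ⟨c, rfl⟩ := mem_span_singleton.1 hz
    rcases (by decide : ∀ c : ZMod 2, c = 0 ∨ c = 1) c with rfl | rfl <;> simp [hy]
  · simpa using add_mem_sup hvx (mem_span_singleton_self x)

theorem le_sup_span_add_of_not_mem {Y X : Submodule (ZMod 2) V} {e₁ e₂ : V} (hYX : Y ≤ X)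
    (hX : X ≤ Y ⊔ span (ZMod 2) {e₁} ⊔ span (ZMod 2) {e₂}) (h₁ : e₁ ∉ X) (h₂ : e₂ ∉ X) :
    X ≤ Y ⊔ span (ZMod 2) {e₁ + e₂} := by
  intro v hv
  have hv' := hX hv
  simp only [mem_sup_span_singleton_iff_zmod_two] at hv' ⊢
  rcases hv' with (hvY | hvY) | (hvY | hvY)
  · exact .inl hvY
  · exact absurd (by simpa using sub_mem hv (hYX hvY)) h₁
  · exact absurd (by simpa using sub_mem hv (hYX hvY)) h₂
  · rw [sub_sub, add_comm] at hvY
    exact .inr hvY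

namespace TwoCyclic

variable {f : V →ₗ[ZMod 2] V} {u₁ u₂ : V} (h : TwoCyclic f u₁ u₂)
  (hRS : expnt f u₁ ≤ expnt f u₂) {X : Submodule (ZMod 2) V} (hX : Charinv f X)
  (hnh : ¬Hyperinv f X) {a d : ℕ} (ha : X.map h.proj₁ = cyc f ((f ^ a) u₁))
  (hd : X.map h.proj₂ = cyc f ((f ^ d) u₂))
include hRS hX hnh ha hd

theorem le_sup_span :
    X ≤ cycPair f u₁ u₂ (a + 1) (d + 1) ⊔ span (ZMod 2) {(f ^ a) u₁ + (f ^ d) u₂} := by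
  refine le_sup_span_add_of_not_mem (h.cycPair_succ_le hX ha hd) ((h.le_cycPair ha hd).trans ?_)
    (h.pow_apply_left_not_mem hRS hX hnh ha hd) (h.pow_apply_right_not_mem hRS hX hnh ha hd)
  rw [cycPair, cyc_eq_span_sup ((f ^ a) u₁), cyc_eq_span_sup ((f ^ d) u₂), cycPair,
    ← Module.End.mul_apply f, ← pow_succ', ← Module.End.mul_apply f, ← pow_succ']
  exact le_of_eq (by ac_rfl)

theorem pow_apply_add_pow_apply_mem : (f ^ a) u₁ + (f ^ d) u₂ ∈ X := by
  obtain ⟨v, hv, hva⟩ : (f ^ a) u₁ ∈ X.map h.proj₁ := ha ▸ mem_cyc_self f _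
  rcases mem_sup_span_singleton_iff_zmod_two.1 (h.le_sup_span hRS hX hnh ha hd hv) with hvY | hvY
  · refine absurd (h.cycPair_succ_le hX ha hd (mem_sup_left ?_))
      (h.pow_apply_left_not_mem hRS hX hnh ha hd)
    exact hva ▸ (h.mem_cycPair_iff.1 hvY).1
  · simpa using sub_mem hv (h.cycPair_succ_le hX ha hd hvY)

theorem eq_sup_span :
    X = cycPair f u₁ u₂ (a + 1) (d + 1) ⊔ span (ZMod 2) {(f ^ a) u₁ + (f ^ d) u₂} :=
  le_antisymm (h.le_sup_span hRS hX hnh ha hd) (sup_le (h.cycPair_succ_le hX ha hd)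
    (span_le.2 (Set.singleton_subset_iff.2 (h.pow_apply_add_pow_apply_mem hRS hX hnh ha hd))))

/-- `toFst` and `toSnd` send `f^a u₁ + f^d u₂ ∈ X` to `f^d u₁` and `f^{a+S-R} u₂`, which must not
reach `f^a u₁` resp. `f^d u₂` under powers of `f`. -/
theorem lt_and_lt_add_and_lt_expnt :
    a < d ∧ d < a + (expnt f u₂ - expnt f u₁) ∧ a < expnt f u₁ := by
  have hx := h.pow_apply_add_pow_apply_mem hRS hX hnh ha hd
  have h₁ : (f ^ d) u₁ ∈ X := by
    simpa [(h.commute_toFst hRS).apply_pow_apply, h.toFst_apply_right hRS] using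
      hX.apply_mem (h.isNilpotent_toFst hRS) (h.commute_toFst hRS) hx
  have h₂ : (f ^ (a + (expnt f u₂ - expnt f u₁))) u₂ ∈ X := by
    simpa [(h.commute_toSnd hRS).apply_pow_apply, h.toSnd_apply_left hRS, pow_apply_pow] using
      hX.apply_mem (h.isNilpotent_toSnd hRS) (h.commute_toSnd hRS) hx
  have hna := h.pow_apply_left_not_mem hRS hX hnh ha hd
  refine ⟨?_, ?_, ?_⟩
  · by_contra! hda
    exact hna (pow_apply_mem_of_le hX.1 h₁ hda)
  · by_contra! hda
    exact h.pow_apply_right_not_mem hRS hX hnh ha hd (pow_apply_mem_of_le hX.1 h₂ hda)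
  · by_contra! haR
    exact hna (by rw [pow_apply_eq_zero_of_expnt_le h.isNilpotent haR]; exact zero_mem X)

theorem eq_charHull : X = charHull f {(f ^ a) u₁ + (f ^ d) u₂} := by
  set x := (f ^ a) u₁ + (f ^ d) u₂
  refine le_antisymm ?_
    (hX.charHull_le (Set.singleton_subset_iff.2 (h.pow_apply_add_pow_apply_mem hRS hX hnh ha hd)))
  have hH := charinv_charHull (f := f) {x}
  have hx : x ∈ charHull f {x} := subset_charHull rfl
  have key {π : V →ₗ[ZMod 2] V} (hπ : Commute π f) {w : V} (hw : π x = w) :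
      cyc f (f w) ≤ charHull f {x} :=
    cyc_le_of_mem hH.1 (hw ▸ hH.apply_mem (hπ.symm.isNilpotent_mul_right h.isNilpotent)
      ((Commute.refl f).mul_left hπ) hx)
  refine (h.eq_sup_span hRS hX hnh ha hd).le.trans
    (sup_le (sup_le ?_ ?_) (span_le.2 (Set.singleton_subset_iff.2 hx)))
  · rw [pow_succ', Module.End.mul_apply]
    exact key h.commute_proj₁ (by simp [x, h.commute_proj₁.apply_pow_apply])
  · rw [pow_succ', Module.End.mul_apply]
    exact key h.commute_proj₂ (by simp [x, h.commute_proj₂.apply_pow_apply])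

/-- A hyperinvariant `W ≤ X` is `π₁`-stable, and `π₁` of an element of the coset
`f^a u₁ + f^d u₂ + cycPair f u₁ u₂ (a + 1) (d + 1)` would put `f^a u₁` into `X`. -/
theorem largestHyperinv_eq : largestHyperinv f X = cycPair f u₁ u₂ (a + 1) (d + 1) := by
  obtain ⟨had, hda, -⟩ := h.lt_and_lt_add_and_lt_expnt hRS hX hnh ha hd
  have hY := h.cycPair_succ_le hX ha hd
  refine le_antisymm (sSup_le ?_) (le_sSup ⟨h.hyperinv_cycPair (pow_apply_mem_cyc_pow u₁
    (by omega)) (pow_apply_mem_cyc_pow u₂ (by omega)), hY⟩)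
  rintro W ⟨hW, hWX⟩ w hw
  refine (mem_sup_span_singleton_iff_zmod_two.1
    (h.eq_sup_span hRS hX hnh ha hd ▸ hWX hw)).resolve_right fun hwx => ?_
  have h₁ : h.proj₁ w ∈ X := hWX (hW _ (LinearMap.congr_fun h.commute_proj₁.eq) w hw)
  have h₂ := hY (mem_sup_left (h.mem_cycPair_iff.1 hwx).1)
  refine h.pow_apply_left_not_mem hRS hX hnh ha hd ?_
  simpa [h.commute_proj₁.apply_pow_apply] using sub_mem h₁ h₂

end TwoCyclic

end ZModTwo

theorem stmt10_general (V : Type*) [AddCommGroup V] [Module (ZMod 2) V]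
    (f : V →ₗ[ZMod 2] V) (hf : IsNilpotent f)
    (u₁ u₂ : V) (R S : ℕ) (hcompl : IsCompl (cyc f u₁) (cyc f u₂))
    (he₁ : expnt f u₁ = R) (he₂ : expnt f u₂ = S) (hRS : R + 1 < S)
    (X : Submodule (ZMod 2) V) (hX : Charinv f X) (hnh : ¬ Hyperinv f X) :
    ∃ s q : ℕ, 0 < s ∧ s < q ∧ s ≤ R ∧ (R : ℤ) - s < (S : ℤ) - q ∧
      X = charHull f {(f ^ (R - s)) u₁ + (f ^ (S - q)) u₂} ∧
      largestHyperinv f X =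
        cyc f ((f ^ (R - s + 1)) u₁) ⊔ cyc f ((f ^ (S - q + 1)) u₂) ∧
      largestHyperinv f X =
        LinearMap.range (f ^ (R - s + 1)) ⊓ LinearMap.ker (f ^ (q - 1)) := by
  subst he₁ he₂
  have h : TwoCyclic f u₁ u₂ := ⟨hf, hcompl⟩
  have hRS' : expnt f u₁ ≤ expnt f u₂ := by omega
  obtain ⟨a, ha⟩ := h.exists_map_proj₁_eq hX.1
  obtain ⟨d, hd⟩ := h.exists_map_proj₂_eq hX.1
  obtain ⟨had, hda, haR⟩ := h.lt_and_lt_add_and_lt_expnt hRS' hX hnh ha hd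
  have hH := h.largestHyperinv_eq hRS' hX hnh ha hd
  refine ⟨expnt f u₁ - a, expnt f u₂ - d, by omega, by omega, by omega, by omega, ?_, ?_, ?_⟩ <;>
    simp only [Nat.sub_sub_self haR.le, Nat.sub_sub_self (by omega : d ≤ expnt f u₂)]
  · exact h.eq_charHull hRS' hX hnh ha hd
  · exact hH
  · rw [hH, Nat.sub_sub, h.range_inf_ker hRS' (by omega) (by omega) (by omega)]

theorem stmt10 (V : Type*) [AddCommGroup V] [Module (ZMod 2) V]
    [FiniteDimensional (ZMod 2) V] (f : V →ₗ[ZMod 2] V) (hf : IsNilpotent f)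
    (u₁ u₂ : V) (R S : ℕ) (hcompl : IsCompl (cyc f u₁) (cyc f u₂))
    (he₁ : expnt f u₁ = R) (he₂ : expnt f u₂ = S) (hRS : R + 1 < S)
    (X : Submodule (ZMod 2) V) (hX : Charinv f X) (hnh : ¬ Hyperinv f X) :
    ∃ s q : ℕ, 0 < s ∧ s < q ∧ s ≤ R ∧ (R : ℤ) - s < (S : ℤ) - q ∧
      X = charHull f {(f ^ (R - s)) u₁ + (f ^ (S - q)) u₂} ∧
      largestHyperinv f X =
        cyc f ((f ^ (R - s + 1)) u₁) ⊔ cyc f ((f ^ (S - q + 1)) u₂) ∧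
      largestHyperinv f X =
        LinearMap.range (f ^ (R - s + 1)) ⊓ LinearMap.ker (f ^ (q - 1)) :=
  stmt10_general V f hf u₁ u₂ R S hcompl he₁ he₂ hRS X hX hnh
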